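/- Let U ⊆ ℝ³ be open, ν : U → ℝ twice continuously differentiable with |∇ν(x)| = 1 for all x ∈ U, k a natural number, z ∈ ℂ with z ≠ 0, g : U → ℂ continuously differentiable, and f_τ : U → ℂ³ continuously differentiable with f_τ·∇ν = 0 on U. Define u = z^{−1}·e^{−zν}·( P₁(zν)·g·∇ν + P₂(zν)·f_τ ). Then on U one has ∇·u = e^{−zν}·[ (zν)^k · g + z^{−1}·( P₁(zν)·∇·(g∇ν) + P₂(zν)·∇·f_τ ) ]. -/

import Mathlib

/-!
For a scalar weight `φ` and a vector field `F`, `∇·(φ(ν) F) = φ(ν) ∇·F + φ'(ν) ∇ν·F`.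
With `φ_P(t) = z⁻¹ e^{-zt} P(zt)` one has `φ_P'(t) = e^{-zt} (P' - P)(zt)`, and
`u = φ_{P₁}(ν) g∇ν + φ_{P₂}(ν) f_τ`. Besides the terms with `∇·(g∇ν)` and `∇·f_τ`, this produces
`e^{-zν} (P₂' - P₂)(zν) f_τ·∇ν = 0` and `e^{-zν} (P₁' - P₁)(zν) g |∇ν|² = e^{-zν} (zν)^k g`,
since `P₁' = P₁ + X^k`: differentiating a truncated exponential series drops its top term.
-/

open Polynomial

/-- Componentwise complexification of a real vector in `ℝ³`. -/
noncomputable def cV (v : EuclideanSpace ℝ (Fin 3)) : EuclideanSpace ℂ (Fin 3) :=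
  WithLp.toLp 2 (fun i => (v i : ℂ))

/-- Divergence of a complex vector field on `ℝ³`. -/
noncomputable def divC (f : EuclideanSpace ℝ (Fin 3) → EuclideanSpace ℂ (Fin 3))
    (x : EuclideanSpace ℝ (Fin 3)) : ℂ :=
  ∑ i : Fin 3, fderiv ℝ f x (EuclideanSpace.single i 1) i

noncomputable def P₁ (k : ℕ) : Polynomial ℂ :=
  -(C (k.factorial : ℂ)) * ∑ j ∈ Finset.range (k + 1), C ((j.factorial : ℂ)⁻¹) * X ^ j

noncomputable def P₂ (k : ℕ) : Polynomial ℂ :=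
  C (((2 : ℂ) ^ (k + 2))⁻¹ * (k.factorial : ℂ)) *
    ∑ j ∈ Finset.Icc 1 (k + 1), C ((j.factorial : ℂ)⁻¹) * (C 2 * X) ^ j

lemma derivative_sum_range_C_inv_factorial_mul_X_pow {K : Type*} [Field K] [CharZero K] (k : ℕ) :
    derivative (∑ j ∈ Finset.range (k + 1), C ((j.factorial : K)⁻¹) * X ^ j) =
      ∑ j ∈ Finset.range k, C ((j.factorial : K)⁻¹) * X ^ j := by
  induction k with
  | zero => simp
  | succ k ih =>
    rw [Finset.sum_range_succ, derivative_add, ih, Finset.sum_range_succ, derivative_C_mul_X_pow]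
    have : (k.factorial : K) ≠ 0 := by exact_mod_cast k.factorial_ne_zero
    congr 3
    push_cast [Nat.factorial_succ]
    field_simp

lemma derivative_P₁ (k : ℕ) : derivative (P₁ k) = P₁ k + X ^ k := by
  have hk : (k.factorial : ℂ) ≠ 0 := by exact_mod_cast k.factorial_ne_zero
  rw [P₁, derivative_mul, derivative_neg, derivative_C, neg_zero, zero_mul, zero_add,
    derivative_sum_range_C_inv_factorial_mul_X_pow, Finset.sum_range_succ, mul_add, ← C_neg,
    ← mul_assoc, ← C_mul]
  simp [hk]

lemma hasDerivAt_exp_neg_mul_eval (p : ℂ[X]) (w : ℂ) :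
    HasDerivAt (fun w => Complex.exp (-w) * p.eval w)
      (Complex.exp (-w) * ((derivative p).eval w - p.eval w)) w :=
  ((hasDerivAt_neg w).cexp.fun_mul (p.hasDerivAt w)).congr_deriv (by ring)

lemma hasDerivAt_inv_mul_exp_neg_mul_eval {z : ℂ} (hz : z ≠ 0) (p : ℂ[X]) (t : ℝ) :
    HasDerivAt (fun s : ℝ => z⁻¹ * Complex.exp (-z * s) * p.eval (z * s))
      (Complex.exp (-z * t) * ((derivative p).eval (z * t) - p.eval (z * t))) t := by
  have h := (((hasDerivAt_exp_neg_mul_eval p (z * t)).comp (t : ℂ)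
    ((hasDerivAt_id (t : ℂ)).const_mul z)).comp_ofReal).const_mul z⁻¹
  refine (h.congr_deriv ?_).congr_of_eventuallyEq (.of_forall fun s => ?_)
  · rw [neg_mul, mul_one]
    field_simp
  · simp [mul_assoc]

lemma fderiv_apply_single_eq_gradient {ι : Type*} [Fintype ι] [DecidableEq ι]
    (ν : EuclideanSpace ℝ ι → ℝ) (x : EuclideanSpace ℝ ι) (i : ι) :
    fderiv ℝ ν x (EuclideanSpace.single i 1) = gradient ν x i := by
  rw [← inner_gradient_left, EuclideanSpace.inner_single_right]
  simp

lemma ContDiffAt.differentiableAt_gradient {F : Type*} [NormedAddCommGroup F]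
    [InnerProductSpace ℝ F] [CompleteSpace F] {ν : F → ℝ} {x : F} (hν : ContDiffAt ℝ 2 ν x) :
    DifferentiableAt ℝ (gradient ν) x :=
  (InnerProductSpace.toDual ℝ F).symm.toContinuousLinearEquiv.differentiableAt.comp x
    ((hν.fderiv_right (by norm_num)).differentiableAt one_ne_zero)

lemma differentiableAt_cV_comp {E : Type*} [NormedAddCommGroup E] [NormedSpace ℝ E]
    {G : E → EuclideanSpace ℝ (Fin 3)} {x : E} (hG : DifferentiableAt ℝ G x) :
    DifferentiableAt ℝ (fun y => cV (G y)) x :=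
  (differentiableAt_piLp 2).2 fun i =>
    Complex.ofRealCLM.differentiableAt.comp x ((differentiableAt_piLp 2).1 hG i)

lemma sum_ofReal_mul_self_eq_norm_sq {ι : Type*} [Fintype ι] (v : EuclideanSpace ℝ ι) :
    ∑ i, (v i : ℂ) * (v i : ℂ) = ((‖v‖ ^ 2 : ℝ) : ℂ) := by
  rw [EuclideanSpace.real_norm_sq_eq]
  push_cast
  simp [sq]

section divC

variable {F G : EuclideanSpace ℝ (Fin 3) → EuclideanSpace ℂ (Fin 3)} {x : EuclideanSpace ℝ (Fin 3)}

lemma divC_add (hF : DifferentiableAt ℝ F x) (hG : DifferentiableAt ℝ G x) :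
    divC (fun y => F y + G y) x = divC F x + divC G x := by
  simp only [divC, fderiv_fun_add hF hG, add_apply, PiLp.add_apply,
    Finset.sum_add_distrib]

lemma divC_smul_comp {ν : EuclideanSpace ℝ (Fin 3) → ℝ} {φ : ℝ → ℂ} {φ' : ℂ}
    (hφ : HasDerivAt φ φ' (ν x)) (hν : DifferentiableAt ℝ ν x) (hF : DifferentiableAt ℝ F x) :
    divC (fun y => φ (ν y) • F y) x =
      φ (ν x) * divC F x + φ' * ∑ i, F x i * (gradient ν x i : ℂ) := by
  have h : HasFDerivAt (fun y => φ (ν y) • F y) _ x :=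
    (hφ.hasFDerivAt.comp x hν.hasFDerivAt).smul hF.hasFDerivAt
  simp only [divC, h.fderiv, add_apply, smul_apply, ContinuousLinearMap.smulRight_apply,
    ContinuousLinearMap.comp_apply, fderiv_apply_single_eq_gradient, PiLp.add_apply,
    PiLp.smul_apply, smul_eq_mul, Finset.sum_add_distrib, Finset.mul_sum]
  congr 1
  refine Finset.sum_congr rfl fun i _ => ?_
  rw [ContinuousLinearMap.toSpanSingleton_apply, Complex.real_smul]
  ring

end divC

/-- let `ν` be `C²` on the open `U` with `|∇ν| = 1`, `k ∈ ℕ`, `z ≠ 0`,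
`g : U → ℂ` of class `C¹`, `f_τ : U → ℂ³` of class `C¹` with `f_τ·∇ν = 0` on `U`, and
`u = z^{−1}·e^{−zν}·(P₁(zν)·g·∇ν + P₂(zν)·f_τ)`. Then on `U`:
`∇·u = e^{−zν}·[(zν)^k·g + z^{−1}·(P₁(zν)·∇·(g∇ν) + P₂(zν)·∇·f_τ)]`. -/
theorem statement10
    (U : Set (EuclideanSpace ℝ (Fin 3))) (hU : IsOpen U)
    (ν : EuclideanSpace ℝ (Fin 3) → ℝ)
    (hν : ContDiffOn ℝ 2 ν U)
    (hgrad : ∀ x ∈ U, ‖gradient ν x‖ = 1)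
    (k : ℕ) (z : ℂ) (hz : z ≠ 0)
    (g : EuclideanSpace ℝ (Fin 3) → ℂ) (hg : ContDiffOn ℝ 1 g U)
    (fτ : EuclideanSpace ℝ (Fin 3) → EuclideanSpace ℂ (Fin 3))
    (hfτ : ContDiffOn ℝ 1 fτ U)
    (hfτν : ∀ x ∈ U, ∑ i : Fin 3, fτ x i * ((gradient ν x i : ℝ) : ℂ) = 0)
    (u : EuclideanSpace ℝ (Fin 3) → EuclideanSpace ℂ (Fin 3))
    (hu : ∀ y, u y = (z⁻¹ * Complex.exp (-z * (ν y : ℂ))) •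
        (((P₁ k).eval (z * (ν y : ℂ)) * g y) • cV (gradient ν y)
          + (P₂ k).eval (z * (ν y : ℂ)) • fτ y))
    (x : EuclideanSpace ℝ (Fin 3)) (hx : x ∈ U) :
    divC u x
      = Complex.exp (-z * (ν x : ℂ)) *
          ((z * (ν x : ℂ)) ^ k * g x
            + z⁻¹ * ((P₁ k).eval (z * (ν x : ℂ))
                  * divC (fun y => g y • cV (gradient ν y)) x
                + (P₂ k).eval (z * (ν x : ℂ)) * divC fτ x)) := by
  have hxU : U ∈ nhds x := hU.mem_nhds hx
  have hν' : ContDiffAt ℝ 2 ν x := hν.contDiffAt hxU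
  have hνx : DifferentiableAt ℝ ν x := hν'.differentiableAt (by norm_num)
  have hgx : DifferentiableAt ℝ g x := (hg.contDiffAt hxU).differentiableAt one_ne_zero
  have hfx : DifferentiableAt ℝ fτ x := (hfτ.contDiffAt hxU).differentiableAt one_ne_zero
  have hNx : DifferentiableAt ℝ (fun y => g y • cV (gradient ν y)) x :=
    hgx.smul (differentiableAt_cV_comp hν'.differentiableAt_gradient)
  set φ : ℂ[X] → ℝ → ℂ := fun p t => z⁻¹ * Complex.exp (-z * t) * p.eval (z * t) with hφ
  have hφ' (p : ℂ[X]) : HasDerivAt (φ p) _ (ν x) := hasDerivAt_inv_mul_exp_neg_mul_eval hz p (ν x)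
  have hφF (p : ℂ[X]) {F : EuclideanSpace ℝ (Fin 3) → EuclideanSpace ℂ (Fin 3)}
      (hF : DifferentiableAt ℝ F x) : DifferentiableAt ℝ (fun y => φ p (ν y) • F y) x :=
    ((hφ' p).differentiableAt.comp x hνx).smul hF
  have hu_eq : u = fun y => φ (P₁ k) (ν y) • (g y • cV (gradient ν y)) + φ (P₂ k) (ν y) • fτ y := by
    funext y
    simp only [hu, hφ, smul_add, smul_smul, mul_assoc]
  have hN : ∑ i, (g x • cV (gradient ν x)) i * (gradient ν x i : ℂ) = g x := by
    simp only [cV, PiLp.smul_apply, smul_eq_mul, mul_assoc, ← Finset.mul_sum,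
      sum_ofReal_mul_self_eq_norm_sq, hgrad x hx, one_pow, Complex.ofReal_one, mul_one]
  rw [hu_eq, divC_add (hφF _ hNx) (hφF _ hfx), divC_smul_comp (hφ' _) hνx hNx,
    divC_smul_comp (hφ' _) hνx hfx, hN, hfτν x hx, derivative_P₁]
  simp only [hφ, eval_add, eval_pow, eval_X]
  field_simp
  ring
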